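/- arXiv:2104.07323 — 2 statements merged into one kernel-verified Lean document; each statement's English description precedes it below -/
import Mathlib

section
/- Let μ₁, μ₂, c₁, c₂, p₁, p₂ > 0 and w > 0, and define f̄(q₁) = p₁²q₁²/(2μ₁c₁) + (2p₂³μ₂²/(3c₂³))·(w − q₁/μ₁)³. Set A = 2w/μ₁ + p₁²c₂³/(2p₂³c₁μ₂²) and q₁* = (1/2)Aμ₁² − √((1/4)A²μ₁⁴ − μ₁²w²). Then q₁* ∈ [0, μ₁w], the quantity under the square root is nonnegative, and f̄'(q₁*) = 0. -/
/-!
Writing `B = p₁²c₂³/(2p₂³c₁μ₂²)`, the condition `f̄'(q₁) = 0` is `(w - q₁/μ₁)² = B q₁`, which after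
multiplying by `μ₁²` is the quadratic `q₁² - Aμ₁² q₁ + μ₁²w² = 0`. Its smaller root is `q₁*`, and since
`Aμ₁²/2 = μ₁w + Bμ₁²/2 ≥ μ₁w`, the discriminant is nonnegative and the smaller root lies in `[0, μ₁w]`.
-/

open Real Set

lemma sub_sqrt_sq_sub_sq_mem_Icc {s m : ℝ} (hm : 0 ≤ m) (hms : m ≤ s) :
    s - √(s ^ 2 - m ^ 2) ∈ Icc 0 m := by
  have hs : 0 ≤ s := hm.trans hms
  constructor
  · have : √(s ^ 2 - m ^ 2) ≤ s :=
      calc √(s ^ 2 - m ^ 2) ≤ √(s ^ 2) := sqrt_le_sqrt (by nlinarith)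
        _ = s := sqrt_sq hs
    linarith
  · have : s - m ≤ √(s ^ 2 - m ^ 2) := le_sqrt_of_sq_le (by nlinarith)
    linarith

lemma sub_sqrt_sq_sub_sq_isRoot {s m : ℝ} (hms : m ^ 2 ≤ s ^ 2) :
    (s - √(s ^ 2 - m ^ 2)) ^ 2 - 2 * s * (s - √(s ^ 2 - m ^ 2)) + m ^ 2 = 0 := by
  linear_combination sq_sqrt (sub_nonneg.2 hms)

lemma sub_div_sq_eq_mul_of_quadratic {μ w B q : ℝ} (hμ : μ ≠ 0)
    (h : q ^ 2 - (2 * w / μ + B) * μ ^ 2 * q + (μ * w) ^ 2 = 0) :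
    (w - q / μ) ^ 2 = B * q := by
  have hμ2 : μ ^ 2 ≠ 0 := pow_ne_zero 2 hμ
  apply mul_left_cancel₀ hμ2
  field_simp at h ⊢
  linear_combination h

noncomputable def restrictedCost (μ₁ μ₂ c₁ c₂ p₁ p₂ w q₁ : ℝ) : ℝ :=
  p₁ ^ 2 * q₁ ^ 2 / (2 * μ₁ * c₁) + (2 * p₂ ^ 3 * μ₂ ^ 2 / (3 * c₂ ^ 3)) * (w - q₁ / μ₁) ^ 3

lemma hasDerivAt_restrictedCost (μ₁ μ₂ c₁ c₂ p₁ p₂ w q₁ : ℝ) :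
    HasDerivAt (restrictedCost μ₁ μ₂ c₁ c₂ p₁ p₂ w)
      (p₁ ^ 2 * q₁ / (μ₁ * c₁) - 2 * p₂ ^ 3 * μ₂ ^ 2 / (c₂ ^ 3 * μ₁) * (w - q₁ / μ₁) ^ 2) q₁ := by
  have hlin : HasDerivAt (fun q : ℝ => w - q / μ₁) (0 - 1 / μ₁) q₁ :=
    (hasDerivAt_const _ w).sub ((hasDerivAt_id q₁).div_const μ₁)
  have hsq : HasDerivAt (fun q : ℝ => q ^ 2) (2 * q₁) q₁ := by simpa using hasDerivAt_pow 2 q₁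
  exact (((hsq.const_mul (p₁ ^ 2)).div_const (2 * μ₁ * c₁)).add
    ((hlin.pow 3).const_mul (2 * p₂ ^ 3 * μ₂ ^ 2 / (3 * c₂ ^ 3)))).congr_deriv (by push_cast; ring)

lemma restrictedCost_deriv_eq_zero {μ₁ μ₂ c₁ c₂ p₁ p₂ w q₁ : ℝ}
    (hμ₁ : μ₁ ≠ 0) (hμ₂ : μ₂ ≠ 0) (hc₁ : c₁ ≠ 0) (hc₂ : c₂ ≠ 0) (hp₂ : p₂ ≠ 0)
    (h : (w - q₁ / μ₁) ^ 2 = p₁ ^ 2 * c₂ ^ 3 / (2 * p₂ ^ 3 * c₁ * μ₂ ^ 2) * q₁) :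
    deriv (restrictedCost μ₁ μ₂ c₁ c₂ p₁ p₂ w) q₁ = 0 := by
  rw [(hasDerivAt_restrictedCost μ₁ μ₂ c₁ c₂ p₁ p₂ w q₁).deriv, h]
  field_simp
  ring

theorem stmt_1_general (μ₁ μ₂ c₁ c₂ p₁ p₂ w : ℝ)
    (hμ₁ : 0 < μ₁) (hμ₂ : 0 < μ₂) (hc₁ : 0 < c₁) (hc₂ : 0 < c₂)
    (hp₂ : 0 < p₂) (hw : 0 < w)
    (f : ℝ → ℝ)
    (hf : f = fun q₁ : ℝ => p₁ ^ 2 * q₁ ^ 2 / (2 * μ₁ * c₁)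
        + (2 * p₂ ^ 3 * μ₂ ^ 2 / (3 * c₂ ^ 3)) * (w - q₁ / μ₁) ^ 3)
    (A : ℝ) (hA : A = 2 * w / μ₁ + p₁ ^ 2 * c₂ ^ 3 / (2 * p₂ ^ 3 * c₁ * μ₂ ^ 2))
    (q₁star : ℝ)
    (hq : q₁star = (1 / 2) * A * μ₁ ^ 2
        - Real.sqrt ((1 / 4) * A ^ 2 * μ₁ ^ 4 - μ₁ ^ 2 * w ^ 2)) :
    q₁star ∈ Set.Icc 0 (μ₁ * w) ∧
    0 ≤ (1 / 4) * A ^ 2 * μ₁ ^ 4 - μ₁ ^ 2 * w ^ 2 ∧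
    deriv f q₁star = 0 := by
  set B := p₁ ^ 2 * c₂ ^ 3 / (2 * p₂ ^ 3 * c₁ * μ₂ ^ 2)
  have hB : 0 ≤ B := by positivity
  have hdisc : (1 / 4) * A ^ 2 * μ₁ ^ 4 - μ₁ ^ 2 * w ^ 2
      = ((1 / 2) * A * μ₁ ^ 2) ^ 2 - (μ₁ * w) ^ 2 := by ring
  have hmw : 0 ≤ μ₁ * w := by positivity
  have hms : μ₁ * w ≤ (1 / 2) * A * μ₁ ^ 2 := by
    have hsplit : (1 / 2) * A * μ₁ ^ 2 = μ₁ * w + B * μ₁ ^ 2 / 2 := by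
      rw [hA]; field_simp
    rw [hsplit]; have := mul_nonneg hB (sq_nonneg μ₁); linarith
  have hsq : (μ₁ * w) ^ 2 ≤ ((1 / 2) * A * μ₁ ^ 2) ^ 2 := pow_le_pow_left₀ hmw hms 2
  rw [hdisc] at hq ⊢
  refine ⟨hq ▸ sub_sqrt_sq_sub_sq_mem_Icc hmw hms, sub_nonneg.2 hsq, ?_⟩
  have hroot : q₁star ^ 2 - (2 * w / μ₁ + B) * μ₁ ^ 2 * q₁star + (μ₁ * w) ^ 2 = 0 := by
    rw [← hA, hq]; linear_combination sub_sqrt_sq_sub_sq_isRoot hsq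
  subst hf
  exact restrictedCost_deriv_eq_zero hμ₁.ne' hμ₂.ne' hc₁.ne' hc₂.ne' hp₂.ne'
    (sub_div_sq_eq_mul_of_quadratic hμ₁.ne' hroot)

theorem stmt_1 (μ₁ μ₂ c₁ c₂ p₁ p₂ w : ℝ)
    (hμ₁ : 0 < μ₁) (hμ₂ : 0 < μ₂) (hc₁ : 0 < c₁) (hc₂ : 0 < c₂)
    (hp₁ : 0 < p₁) (hp₂ : 0 < p₂) (hw : 0 < w)
    (f : ℝ → ℝ)
    (hf : f = fun q₁ : ℝ => p₁ ^ 2 * q₁ ^ 2 / (2 * μ₁ * c₁)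
        + (2 * p₂ ^ 3 * μ₂ ^ 2 / (3 * c₂ ^ 3)) * (w - q₁ / μ₁) ^ 3)
    (A : ℝ) (hA : A = 2 * w / μ₁ + p₁ ^ 2 * c₂ ^ 3 / (2 * p₂ ^ 3 * c₁ * μ₂ ^ 2))
    (q₁star : ℝ)
    (hq : q₁star = (1 / 2) * A * μ₁ ^ 2
        - Real.sqrt ((1 / 4) * A ^ 2 * μ₁ ^ 4 - μ₁ ^ 2 * w ^ 2)) :
    q₁star ∈ Set.Icc 0 (μ₁ * w) ∧
    0 ≤ (1 / 4) * A ^ 2 * μ₁ ^ 4 - μ₁ ^ 2 * w ^ 2 ∧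
    deriv f q₁star = 0 :=
  stmt_1_general μ₁ μ₂ c₁ c₂ p₁ p₂ w hμ₁ hμ₂ hc₁ hc₂ hp₂ hw f hf A hA q₁star hq
end

section
/- Let p₁, p₂, μ₁, μ₂, c₁, c₂, w > 0 and let q* = (q₁*, q₂*) with q₁* as in the explicit formula q₁* = (1/2)Aμ₁² − √((1/4)A²μ₁⁴ − μ₁²w²), A = 2w/μ₁ + p₁²c₂³/(2p₂³c₁μ₂²), and q₂* = μ₂(w − q₁*/μ₁). Then q* is a Nash equilibrium for the constrained dual-cost game: for any q₁ ∈ [0, μ₁w] with corresponding q₂ = μ₂(w − q₁/μ₁), we have C₁(p₁q₁*, c₁) + C₂(p₂q₂*, c₂) ≤ C₁(p₁q₁, c₁) + C₂(p₂q₂, c₂), where C₁(x,c₁) = x²/(2μ₁c₁) and C₂(x,c₂) = 2x³/(3μ₂c₂³). -/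
/-!
On the workload line the total cost is `a q² + b (M - q)³` with `a, b ≥ 0` and `M = μ₁ w`,
convex for `q ≤ M`. The critical-point equation `2 a q = 3 b (M - q)²` is the quadratic
`q² - A μ₁² q + μ₁² w² = 0`, whose smaller root is the explicit `q₁* ≤ M`; at a critical point
`f q - f q₁* = (q - q₁*)² (a + b (2 (M - q₁*) + (M - q)))`, which is nonnegative for `q ≤ M`.
-/

theorem sq_add_cube_le_of_critical {a b M q₀ : ℝ} (ha : 0 ≤ a) (hb : 0 ≤ b)
    (hcrit : 2 * a * q₀ = 3 * b * (M - q₀) ^ 2) (hq₀ : q₀ ≤ M) {q : ℝ} (hq : q ≤ M) :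
    a * q₀ ^ 2 + b * (M - q₀) ^ 3 ≤ a * q ^ 2 + b * (M - q) ^ 3 := by
  have hfactor : a * q ^ 2 + b * (M - q) ^ 3 - (a * q₀ ^ 2 + b * (M - q₀) ^ 3)
      = (q - q₀) ^ 2 * (a + b * (2 * (M - q₀) + (M - q))) := by
    linear_combination (q - q₀) * hcrit
  have : 0 ≤ (q - q₀) ^ 2 * (a + b * (2 * (M - q₀) + (M - q))) := by
    have : 0 ≤ 2 * (M - q₀) + (M - q) := by linarith
    positivity
  linarith

section SmallerRoot

variable {S P : ℝ}

theorem smaller_root_isRoot (hP : 0 ≤ P) (hS : 2 * P ≤ S) :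
    (S / 2 - √(S ^ 2 / 4 - P ^ 2)) ^ 2 - S * (S / 2 - √(S ^ 2 / 4 - P ^ 2)) + P ^ 2 = 0 := by
  have hdisc : 0 ≤ S ^ 2 / 4 - P ^ 2 := by nlinarith
  linear_combination Real.sq_sqrt hdisc

theorem smaller_root_le (hP : 0 ≤ P) (hS : 2 * P ≤ S) :
    S / 2 - √(S ^ 2 / 4 - P ^ 2) ≤ P := by
  have : (S / 2 - P) ^ 2 ≤ S ^ 2 / 4 - P ^ 2 := by nlinarith
  have := Real.le_sqrt_of_sq_le this
  linarith

end SmallerRoot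

theorem workload_cost_eq {μ₁ : ℝ} (hμ₁ : μ₁ ≠ 0) (μ₂ c₁ c₂ p₁ p₂ w q : ℝ) :
    (p₁ * q) ^ 2 / (2 * μ₁ * c₁) + 2 * (p₂ * (μ₂ * (w - q / μ₁))) ^ 3 / (3 * μ₂ * c₂ ^ 3)
      = p₁ ^ 2 / (2 * μ₁ * c₁) * q ^ 2
        + 2 * p₂ ^ 3 * μ₂ ^ 2 / (3 * μ₁ ^ 3 * c₂ ^ 3) * (μ₁ * w - q) ^ 3 := by
  field_simp

theorem stmt_17_general (μ₁ μ₂ c₁ c₂ p₁ p₂ w : ℝ)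
    (hμ₁ : 0 < μ₁) (hμ₂ : 0 < μ₂) (hc₁ : 0 < c₁) (hc₂ : 0 < c₂)
    (hp₂ : 0 < p₂) (hw : 0 < w)
    (A : ℝ) (hA : A = 2 * w / μ₁ + p₁ ^ 2 * c₂ ^ 3 / (2 * p₂ ^ 3 * c₁ * μ₂ ^ 2))
    (q₁star q₂star : ℝ)
    (h₁ : q₁star = (1 / 2) * A * μ₁ ^ 2
        - Real.sqrt ((1 / 4) * A ^ 2 * μ₁ ^ 4 - μ₁ ^ 2 * w ^ 2))
    (h₂ : q₂star = μ₂ * (w - q₁star / μ₁))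
    (C₁ C₂ : ℝ → ℝ)
    (hC₁ : C₁ = fun x => x ^ 2 / (2 * μ₁ * c₁))
    (hC₂ : C₂ = fun x => 2 * x ^ 3 / (3 * μ₂ * c₂ ^ 3)) :
    ∀ q₁ ∈ Set.Icc 0 (μ₁ * w), ∀ q₂ : ℝ, q₂ = μ₂ * (w - q₁ / μ₁) →
      C₁ (p₁ * q₁star) + C₂ (p₂ * q₂star) ≤ C₁ (p₁ * q₁) + C₂ (p₂ * q₂) := by
  rintro q₁ ⟨-, hq₁⟩ q₂ rfl
  set K := p₁ ^ 2 * c₂ ^ 3 / (2 * p₂ ^ 3 * c₁ * μ₂ ^ 2)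
  have hAμ : A * μ₁ ^ 2 = 2 * (μ₁ * w) + K * μ₁ ^ 2 := by rw [hA]; field_simp
  have hS : 2 * (μ₁ * w) ≤ A * μ₁ ^ 2 := by
    rw [hAμ]
    linarith [show 0 ≤ K * μ₁ ^ 2 by positivity]
  have hq₁star : q₁star = A * μ₁ ^ 2 / 2 - √((A * μ₁ ^ 2) ^ 2 / 4 - (μ₁ * w) ^ 2) := by
    rw [h₁]; ring_nf
  have hμw : 0 ≤ μ₁ * w := by positivity
  have hroot := smaller_root_isRoot hμw hS
  rw [← hq₁star] at hroot
  have hcoeff : 2 * (p₁ ^ 2 / (2 * μ₁ * c₁))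
      = 3 * (2 * p₂ ^ 3 * μ₂ ^ 2 / (3 * μ₁ ^ 3 * c₂ ^ 3)) * (K * μ₁ ^ 2) := by
    simp only [K]
    field_simp
  have hcrit : 2 * (p₁ ^ 2 / (2 * μ₁ * c₁)) * q₁star
      = 3 * (2 * p₂ ^ 3 * μ₂ ^ 2 / (3 * μ₁ ^ 3 * c₂ ^ 3)) * (μ₁ * w - q₁star) ^ 2 := by
    linear_combination q₁star * hcoeff
      - 3 * (2 * p₂ ^ 3 * μ₂ ^ 2 / (3 * μ₁ ^ 3 * c₂ ^ 3)) * (hroot + q₁star * hAμ)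
  rw [h₂, hC₁, hC₂]
  simp only [workload_cost_eq hμ₁.ne']
  exact sq_add_cube_le_of_critical (by positivity) (by positivity) hcrit
    (hq₁star ▸ smaller_root_le hμw hS) hq₁

theorem stmt_17 (μ₁ μ₂ c₁ c₂ p₁ p₂ w : ℝ)
    (hμ₁ : 0 < μ₁) (hμ₂ : 0 < μ₂) (hc₁ : 0 < c₁) (hc₂ : 0 < c₂)
    (hp₁ : 0 < p₁) (hp₂ : 0 < p₂) (hw : 0 < w)
    (A : ℝ) (hA : A = 2 * w / μ₁ + p₁ ^ 2 * c₂ ^ 3 / (2 * p₂ ^ 3 * c₁ * μ₂ ^ 2))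
    (q₁star q₂star : ℝ)
    (h₁ : q₁star = (1 / 2) * A * μ₁ ^ 2
        - Real.sqrt ((1 / 4) * A ^ 2 * μ₁ ^ 4 - μ₁ ^ 2 * w ^ 2))
    (h₂ : q₂star = μ₂ * (w - q₁star / μ₁))
    (C₁ C₂ : ℝ → ℝ)
    (hC₁ : C₁ = fun x => x ^ 2 / (2 * μ₁ * c₁))
    (hC₂ : C₂ = fun x => 2 * x ^ 3 / (3 * μ₂ * c₂ ^ 3)) :
    ∀ q₁ ∈ Set.Icc 0 (μ₁ * w), ∀ q₂ : ℝ, q₂ = μ₂ * (w - q₁ / μ₁) →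
      C₁ (p₁ * q₁star) + C₂ (p₂ * q₂star) ≤ C₁ (p₁ * q₁) + C₂ (p₂ * q₂) :=
  stmt_17_general μ₁ μ₂ c₁ c₂ p₁ p₂ w hμ₁ hμ₂ hc₁ hc₂ hp₂ hw A hA q₁star q₂star h₁ h₂ C₁ C₂ hC₁ hC₂
end
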